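/- arXiv:math/0109177 — 3 statements merged into one kernel-verified Lean document; each statement's English description precedes it below -/
import Mathlib

section
/- If X is an infinite dimensional Banach space over ℝ and H is a Hamel basis (algebraic basis) of X, then there exists a positive integer n such that the set H_n of all linear combinations of exactly n distinct elements of H with nonzero coefficients is not a Borel subset of X. -/
/-!
Write `N v` for the number of basis vectors used by `v`, so that `H_n` is the level set
`{N = n}` and these level sets cover `X`. By Baire, some `H_n` is nonmeagre. If it were Borel,
Pettis' theorem would make `H_n - H_n` a neighbourhood of `0`. But `N (x - y) ≤ N x + N y`
keeps `H_n - H_n` inside `{N ≤ 2n}`, while `N` is invariant under nonzero scalars, so small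
multiples of a vector with `N > 2n` (which exists as `H` is infinite) approach `0` outside it.
Finally `n ≠ 0`, since `H_0 = {0}` is Borel.
-/

open Set

/-- The set of linear combinations of exactly `n` distinct elements of `H`
with nonzero coefficients. -/
def lincombs {X : Type*} [AddCommGroup X] [Module ℝ X] (H : Set X) (n : ℕ) : Set X :=
  {v | ∃ (s : Finset X) (c : X → ℝ), ↑s ⊆ H ∧ s.card = n ∧
    (∀ x ∈ s, c x ≠ 0) ∧ v = ∑ x ∈ s, c x • x}

open Filter Topology Module Finset
open scoped Pointwise

theorem BaireMeasurableSet.sub_self_mem_nhds_zero {G : Type*} [TopologicalSpace G] [AddGroup G]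
    [IsTopologicalAddGroup G] [BaireSpace G] {S : Set G} (hS : BaireMeasurableSet S)
    (hS' : ¬IsMeagre S) : S - S ∈ 𝓝 0 := by
  obtain ⟨U, hU, hSU⟩ := hS.residualEq_isOpen
  obtain ⟨u, hu⟩ : U.Nonempty := by
    rw [Set.nonempty_iff_ne_empty]
    rintro rfl
    exact hS' (eventuallyEq_empty.mp hSU)
  have hnhds : (· + u) ⁻¹' U ∈ 𝓝 (0 : G) :=
    (continuous_add_const u).continuousAt.preimage_mem_nhds (by simpa using hU.mem_nhds hu)
  filter_upwards [hnhds] with v hv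
  have hshift : Tendsto (-v + ·) (residual G) (residual G) :=
    tendsto_residual_of_isOpenMap (continuous_const_add (-v)) (Homeomorph.addLeft (-v)).isOpenMap
  have hres : ∀ᶠ x in residual G, (x ∈ S ↔ x ∈ U) ∧ (-v + x ∈ S ↔ -v + x ∈ U) :=
    (eventuallyEq_set.mp hSU).and (eventuallyEq_set.mp (hSU.comp_tendsto hshift))
  obtain ⟨x, ⟨hxU, hxvU⟩, hxS, hxvS⟩ := (dense_of_mem_residual hres).inter_open_nonempty
    (U ∩ (-v + ·) ⁻¹' U) (hU.inter (hU.preimage (continuous_const_add (-v))))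
    ⟨v + u, hv, by simpa using hu⟩
  exact ⟨x, hxS.2 hxU, -v + x, hxvS.2 hxvU, by simp [sub_eq_add_neg]⟩

section Weight

variable {X : Type*} [AddCommGroup X] [Module ℝ X] [TopologicalSpace X]
  [IsTopologicalAddGroup X] [ContinuousSMul ℝ X] [BaireSpace X] {N : X → ℕ}

theorem not_baireMeasurableSet_fiber_of_sub_le (hsub : ∀ x y, N (x - y) ≤ N x + N y)
    (hsmul : ∀ (c : ℝ) x, c ≠ 0 → N (c • x) = N x) {n : ℕ} (hw : ∃ w, 2 * n < N w)
    (hmeagre : ¬IsMeagre (N ⁻¹' {n})) : ¬BaireMeasurableSet (N ⁻¹' {n}) := by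
  intro hmeas
  obtain ⟨w, hw⟩ := hw
  have hsmall : Tendsto (fun c : ℝ => c • w) (𝓝[≠] 0) (𝓝 0) :=
    ((continuous_id.smul continuous_const).tendsto' 0 0 (zero_smul ℝ w)).mono_left
      nhdsWithin_le_nhds
  obtain ⟨c, ⟨a, ha, b, hb, hab⟩, hc⟩ :=
    ((hsmall.eventually (hmeas.sub_self_mem_nhds_zero hmeagre)).and self_mem_nhdsWithin).exists
  have := hsub a b
  simp only [Set.mem_preimage, mem_singleton_iff] at ha hb hab
  rw [hab, hsmul c w hc, ha, hb] at this
  omega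

theorem exists_not_measurableSet_fiber_of_sub_le [MeasurableSpace X] [BorelSpace X]
    (hsub : ∀ x y, N (x - y) ≤ N x + N y) (hsmul : ∀ (c : ℝ) x, c ≠ 0 → N (c • x) = N x)
    (hunbdd : ∀ n, ∃ w, n < N w) : ∃ n, ¬MeasurableSet (N ⁻¹' {n}) := by
  obtain ⟨n, hn⟩ : ∃ n, ¬IsMeagre (N ⁻¹' {n}) := by
    by_contra! h
    have hcover : (⋃ n, N ⁻¹' {n}) = univ := eq_univ_of_forall fun x => mem_iUnion.2 ⟨N x, rfl⟩
    exact not_isMeagre_of_isOpen isOpen_univ univ_nonempty (hcover ▸ isMeagre_iUnion h)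
  exact ⟨n, fun h => not_baireMeasurableSet_fiber_of_sub_le hsub hsmul (hunbdd (2 * n)) hn
    h.baireMeasurableSet⟩

end Weight

section Basis

variable {ι R M : Type*} [Ring R] [AddCommGroup M] [Module R M] (b : Basis ι R M)

theorem Module.Basis.card_support_repr_sub_le (x y : M) :
    #(b.repr (x - y)).support ≤ #(b.repr x).support + #(b.repr y).support := by
  classical
  rw [map_sub]
  exact (Finset.card_le_card Finsupp.support_sub).trans (card_union_le _ _)

theorem Module.Basis.card_support_repr_smul [IsDomain R] {c : R} (hc : c ≠ 0) (x : M) :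
    #(b.repr (c • x)).support = #(b.repr x).support := by
  rw [map_smul, Finsupp.support_smul_eq hc]

end Basis

theorem lincombs_nonempty {X : Type*} [AddCommGroup X] [Module ℝ X] {H : Set X}
    (hH : H.Infinite) (n : ℕ) : (lincombs H n).Nonempty := by
  obtain ⟨s, hsH, hs⟩ := hH.exists_subset_card_eq n
  exact ⟨_, s, fun _ => 1, hsH, hs, fun _ _ => one_ne_zero, rfl⟩

theorem lincombs_range_basis {ι X : Type*} [AddCommGroup X] [Module ℝ X] (b : Basis ι ℝ X)
    (n : ℕ) : lincombs (range b) n = (fun v => #(b.repr v).support) ⁻¹' {n} := by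
  classical
  ext v
  simp only [Set.mem_preimage, mem_singleton_iff]
  constructor
  · rintro ⟨s, c, hs, rfl, hc, rfl⟩
    rw [← image_univ, subset_set_image_iff] at hs
    obtain ⟨t, -, rfl⟩ := hs
    have hsupp : (b.repr (∑ x ∈ t.image b, c x • x)).support = t := by
      ext i
      simpa [sum_image fun i _ j _ h => b.injective h, Finsupp.single_apply] using
        fun hi => hc _ (mem_image_of_mem b hi)
    rw [hsupp, Finset.card_image_of_injective _ b.injective]
  · intro hv
    refine ⟨(b.repr v).support.image b, Function.extend b (b.repr v) 0, ?_, ?_, ?_, ?_⟩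
    · exact coe_image_subset_range
    · rw [Finset.card_image_of_injective _ b.injective, hv]
    · intro x hx
      obtain ⟨i, hi, rfl⟩ := mem_image.mp hx
      rw [b.injective.extend_apply]
      exact Finsupp.mem_support_iff.mp hi
    · rw [sum_image fun i _ j _ h => b.injective h]
      simpa [b.injective.extend_apply, Finsupp.linearCombination_apply, Finsupp.sum] using
        (b.linearCombination_repr v).symm

theorem hamel_basis_not_linearly_borel
    (X : Type*) [NormedAddCommGroup X] [NormedSpace ℝ X] [CompleteSpace X]
    [MeasurableSpace X] [BorelSpace X]
    (hinf : ¬ FiniteDimensional ℝ X)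
    (H : Set X) (hli : LinearIndependent ℝ ((↑) : H → X))
    (hsp : Submodule.span ℝ H = ⊤) :
    ∃ n : ℕ, 0 < n ∧ ¬ MeasurableSet (lincombs H n) := by
  let b := Basis.mk hli (by rw [Subtype.range_coe, hsp])
  have hrange : range b = H := by rw [Basis.coe_mk, Subtype.range_coe]
  have hfiber (n : ℕ) : (fun v => #(b.repr v).support) ⁻¹' {n} = lincombs H n := by
    rw [← lincombs_range_basis, hrange]
  have hH : H.Infinite := fun hfin => hinf (have := hfin.to_subtype; Module.Finite.of_basis b)
  have hunbdd (n : ℕ) : ∃ v, n < #(b.repr v).support := by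
    obtain ⟨v, hv⟩ := lincombs_nonempty hH (n + 1)
    rw [← hfiber, Set.mem_preimage, mem_singleton_iff] at hv
    exact ⟨v, hv ▸ n.lt_succ_self⟩
  obtain ⟨n, hn⟩ := exists_not_measurableSet_fiber_of_sub_le b.card_support_repr_sub_le
    (fun c x hc => b.card_support_repr_smul hc x) hunbdd
  refine ⟨n, Nat.pos_of_ne_zero ?_, hfiber n ▸ hn⟩
  rintro rfl
  have hzero : (fun v => #(b.repr v).support) ⁻¹' {0} = {0} := by ext; simp
  exact hn (hzero ▸ measurableSet_singleton 0)
end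

section
/- Let H be a linearly independent subset of a real vector space X, m a positive integer, x ∈ H_m and y ∈ H_{3m+1}, where H_n denotes the set of linear combinations of exactly n distinct elements of H with nonzero coefficients. Then for every z ∈ H_m, the vector x + y + (1/2)(z − x) does not lie in H_m. -/
open Set

private lemma coeff_zero {X : Type*} [AddCommGroup X] [Module ℝ X] {H : Set X}
    (hli : LinearIndependent ℝ ((↑) : H → X))
    (u : Finset X) (hu : ↑u ⊆ H) (g : X → ℝ)
    (h : ∑ a ∈ u, g a • a = 0) : ∀ a ∈ u, g a = 0 := by
  classical
  have key : ∑ a ∈ u.subtype (· ∈ H), g ↑a • (↑a : X) = 0 := by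
    have h2 := Finset.sum_subtype_eq_sum_filter (f := fun a => g a • a)
      (s := u) (p := (· ∈ H))
    rw [Finset.filter_true_of_mem (fun a ha => hu ha)] at h2
    rw [h2]; exact h
  intro a ha
  exact linearIndependent_iff'.mp hli (u.subtype (· ∈ H)) (fun b => g ↑b) key
    ⟨a, hu ha⟩ (by simp [Finset.mem_subtype, ha])

open Classical in
private lemma sum_ite_subset {X : Type*} [AddCommGroup X] [Module ℝ X]
    {u s : Finset X} (hsu : s ⊆ u) (f : X → ℝ) :
    ∑ a ∈ u, (if a ∈ s then f a else 0) • a = ∑ a ∈ s, f a • a := by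
  classical
  simp only [ite_smul, zero_smul, Finset.sum_ite_mem,
    Finset.inter_eq_right.mpr hsu]

theorem shifted_image_disjoint
    (X : Type*) [AddCommGroup X] [Module ℝ X]
    (H : Set X) (hli : LinearIndependent ℝ ((↑) : H → X))
    (m : ℕ) (hm : 0 < m)
    (x : X) (hx : x ∈ lincombs H m)
    (y : X) (hy : y ∈ lincombs H (3 * m + 1)) :
    ∀ z ∈ lincombs H m, x + y + (2⁻¹ : ℝ) • (z - x) ∉ lincombs H m := by
  classical
  intro z hz hcontra
  obtain ⟨sx, cx, hsxH, hsxcard, hcx, hxeq⟩ := hx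
  obtain ⟨sy, cy, hsyH, hsycard, hcy, hyeq⟩ := hy
  obtain ⟨sz, cz, hszH, hszcard, hcz, hzeq⟩ := hz
  obtain ⟨sw, cw, hswH, hswcard, hcw, hweq⟩ := hcontra
  set u : Finset X := sw ∪ sx ∪ sz with hu
  have hswu : sw ⊆ u := by intro a ha; simp [hu, ha]
  have hsxu : sx ⊆ u := by intro a ha; simp [hu, ha]
  have hszu : sz ⊆ u := by intro a ha; simp [hu, ha]
  set e : X → ℝ := fun a =>
    (if a ∈ sw then cw a else 0) - 2⁻¹ * (if a ∈ sx then cx a else 0)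
      - 2⁻¹ * (if a ∈ sz then cz a else 0) with he
  have hyu : y = ∑ a ∈ u, e a • a := by
    have hsum : ∑ a ∈ u, e a • a
        = (∑ a ∈ sw, cw a • a) - (2⁻¹ : ℝ) • (∑ a ∈ sx, cx a • a)
          - (2⁻¹ : ℝ) • (∑ a ∈ sz, cz a • a) := by
      rw [← sum_ite_subset hswu cw, ← sum_ite_subset hsxu cx,
        ← sum_ite_subset hszu cz, Finset.smul_sum, Finset.smul_sum,
        ← Finset.sum_sub_distrib, ← Finset.sum_sub_distrib]
      refine Finset.sum_congr rfl fun a _ => ?_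
      simp only [he, sub_smul, mul_smul]
    rw [hsum, ← hxeq, ← hzeq, ← hweq]
    have heq : x + y + (2⁻¹ : ℝ) • (z - x)
        = y + ((2⁻¹ : ℝ) • x + (2⁻¹ : ℝ) • z) := by module
    rw [heq]; abel
  set g : X → ℝ := fun a =>
    (if a ∈ sy then cy a else 0) - (if a ∈ u then e a else 0) with hg
  set t : Finset X := sy ∪ u with ht
  have hsyt : sy ⊆ t := by intro a ha; simp [ht, ha]
  have hut : u ⊆ t := by intro a ha; simp [ht, ha]
  have htH : ↑t ⊆ H := by
    intro a ha
    simp only [ht, hu, Finset.coe_union, Set.mem_union] at ha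
    rcases ha with h | (h | h) | h
    exacts [hsyH h, hswH h, hsxH h, hszH h]
  have hgsum : ∑ a ∈ t, g a • a = 0 := by
    have : ∑ a ∈ t, g a • a
        = (∑ a ∈ sy, cy a • a) - (∑ a ∈ u, e a • a) := by
      rw [← sum_ite_subset hsyt cy, ← sum_ite_subset hut e,
        ← Finset.sum_sub_distrib]
      refine Finset.sum_congr rfl fun a _ => ?_
      simp [hg, sub_smul]
    rw [this, ← hyeq, ← hyu, sub_self]
  have hzero := coeff_zero hli t htH g hgsum
  have hsyu : sy ⊆ u := by
    intro a ha
    by_contra hau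
    have := hzero a (hsyt ha)
    simp only [hg, ha, if_pos, hau, if_neg, not_false_iff, sub_zero] at this
    exact hcy a ha this
  have hcard : u.card ≤ 3 * m := by
    calc u.card ≤ (sw ∪ sx).card + sz.card := Finset.card_union_le _ _
      _ ≤ sw.card + sx.card + sz.card := by
          have := Finset.card_union_le sw sx; omega
      _ = 3 * m := by rw [hswcard, hsxcard, hszcard]; ring
  have := Finset.card_le_card hsyu
  omega
end

section
/- Let X be a Baire topological vector space over ℝ, O a nonempty open set, S ⊆ X with O \ S meager, x ∈ S ∩ O, and ε > 0 with B(x, 2ε) ⊆ O. Suppose y ∈ X with ‖y‖ < ε satisfies: (x + y + (1/2)(z − x)) ∉ S for all z ∈ S ∩ B(x, 2ε). Then a contradiction follows; i.e., no such configuration exists. -/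
open Set Metric

theorem no_such_configuration
    (X : Type*) [NormedAddCommGroup X] [NormedSpace ℝ X] [CompleteSpace X]
    (O : Set X) (hO : IsOpen O) (hOne : O.Nonempty)
    (S : Set X) (hmeager : IsMeagre (O \ S))
    (x : X) (hx : x ∈ S ∩ O)
    (ε : ℝ) (hε : 0 < ε) (hball : ball x (2 * ε) ⊆ O)
    (y : X) (hy : ‖y‖ < ε)
    (hdisj : ∀ z ∈ S ∩ ball x (2 * ε), x + y + (2⁻¹ : ℝ) • (z - x) ∉ S) :
    False := by
  -- the homeomorphism w ↦ 2•w - (x + 2•y)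
  set h : X ≃ₜ X :=
    (Homeomorph.smulOfNeZero (2 : ℝ) two_ne_zero).trans
      (Homeomorph.addRight (-(x + (2 : ℝ) • y))) with hh
  have hmeager2 : IsMeagre (h ⁻¹' (O \ S)) :=
    hmeager.preimage_of_isOpenMap h.continuous h.isOpenMap
  have hM : IsMeagre ((O \ S) ∪ h ⁻¹' (O \ S)) := by
    rw [IsMeagre, compl_union]
    exact Filter.inter_mem hmeager hmeager2
  have hsub : ball (x + y) ε ⊆ (O \ S) ∪ h ⁻¹' (O \ S) := by
    intro w hw
    have hwn : ‖w - (x + y)‖ < ε := by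
      simpa [mem_ball, dist_eq_norm] using hw
    by_cases hwS : w ∈ S
    · right
      set z := h w with hz
      have hzx : z - x = (2 : ℝ) • (w - (x + y)) := by
        show ((2 : ℝ) • w + -(x + (2 : ℝ) • y)) - x = (2 : ℝ) • (w - (x + y))
        module
      have hzball : z ∈ ball x (2 * ε) := by
        rw [mem_ball, dist_eq_norm, hzx, norm_smul]
        simp only [Real.norm_ofNat]
        nlinarith
      have hzO : z ∈ O := hball hzball
      refine ⟨hzO, fun hzS => ?_⟩
      have := hdisj z ⟨hzS, hzball⟩
      apply this
      have : x + y + (2⁻¹ : ℝ) • (z - x) = w := by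
        rw [hzx]; module
      rwa [this]
    · left
      refine ⟨hball ?_, hwS⟩
      rw [mem_ball, dist_eq_norm]
      have : w - x = (w - (x + y)) + y := by abel
      rw [this]
      calc ‖w - (x + y) + y‖ ≤ ‖w - (x + y)‖ + ‖y‖ := norm_add_le _ _
        _ < 2 * ε := by linarith
  have hMball : IsMeagre (ball (x + y) ε) := hM.mono hsub
  have hdense : Dense ((ball (x + y) ε)ᶜ) := dense_of_mem_residual hMball
  obtain ⟨p, hp1, hp2⟩ := hdense.exists_mem_open isOpen_ball
    ⟨x + y, mem_ball_self hε⟩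
  exact hp1 hp2
end
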